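/- arXiv:2301.04439 — 4 statements merged into one kernel-verified Lean document; each statement's English description precedes it below -/
import Mathlib

section
/- In the error-in-variables model, if ξ, ε, u have finite third absolute moments and β₀ · E[ξ³] ≠ 0, then for every real number β one has E[x y² − β x² y] = 0 if and only if β = β₀; that is, β₀ is the unique solution of the population moment condition E[x y² − β x² y] = 0. -/
/-!
Write `x`, `y - β x` and `y` as linear forms `∑ aᵢ Xᵢ`, `∑ bᵢ Xᵢ`, `∑ cᵢ Xᵢ` in `X = (ξ, ε, u)`.
For independent centred `Xᵢ` the mixed third moment `E[Xᵢ Xⱼ Xₖ]` vanishes unless `i = j = k`,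
since an index occurring only once splits off as an independent centred factor. Hence
`E[x y² - β x² y] = E[x (y - β x) y] = ∑ aᵢ bᵢ cᵢ E[Xᵢ³] = β₀ (β₀ - β) E[ξ³]`.
-/

open MeasureTheory ProbabilityTheory
open scoped ENNReal

theorem MeasureTheory.MemLp.integrable_mul_mul {α 𝕜 : Type*} [MeasurableSpace α]
    {μ : Measure α} [NormedRing 𝕜] {f g h : α → 𝕜}
    (hf : MemLp f 3 μ) (hg : MemLp g 3 μ) (hh : MemLp h 3 μ) :
    Integrable (f * g * h) μ := by
  have : ENNReal.HolderTriple (3 : ℝ≥0∞) 3 (3 / 2) := ⟨by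
    rw [ENNReal.inv_div (by norm_num) (by norm_num), ← one_div, ENNReal.div_add_div_same]
    norm_num⟩
  have : ENNReal.HolderTriple (3 / 2 : ℝ≥0∞) 3 1 := ⟨by
    rw [ENNReal.inv_div (by norm_num) (by norm_num), inv_one, ← one_div,
      ENNReal.div_add_div_same]
    norm_num
    exact ENNReal.div_self (by norm_num) (by norm_num)⟩
  exact (hg.mul (r := 3 / 2) hf).integrable_mul hh

namespace ProbabilityTheory.iIndepFun

variable {Ω ι : Type*} [MeasurableSpace Ω] {μ : Measure Ω} {X : ι → Ω → ℝ}

theorem integral_mul_mul_eq_zero (hX : iIndepFun X μ) (hmeas : ∀ i, Measurable (X i))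
    (h0 : ∀ i, ∫ ω, X i ω ∂μ = 0) {i j k : ι} (hik : i ≠ k) (hjk : j ≠ k) :
    ∫ ω, X i ω * X j ω * X k ω ∂μ = 0 :=
  ((hX.indepFun_mul_left hmeas i j k hik hjk).integral_fun_mul_eq_mul_integral
    ((hmeas i).mul (hmeas j)).aestronglyMeasurable (hmeas k).aestronglyMeasurable).trans
    (by rw [h0 k, mul_zero])

theorem integral_mul_mul [DecidableEq ι] (hX : iIndepFun X μ) (hmeas : ∀ i, Measurable (X i))
    (h0 : ∀ i, ∫ ω, X i ω ∂μ = 0) (i j k : ι) :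
    ∫ ω, X i ω * X j ω * X k ω ∂μ = if i = j ∧ i = k then ∫ ω, X i ω ^ 3 ∂μ else 0 := by
  split_ifs with h
  · obtain ⟨rfl, rfl⟩ := h
    simp only [pow_three, mul_assoc]
  by_cases hik : i = k
  · subst hik
    have hij : i ≠ j := fun hij => h ⟨hij, rfl⟩
    simp_rw [mul_right_comm (X i _) (X j _)]
    exact hX.integral_mul_mul_eq_zero hmeas h0 hij hij
  by_cases hjk : j = k
  · subst hjk
    have hji : j ≠ i := fun hji => h ⟨hji.symm, hji.symm⟩
    simp_rw [mul_assoc, mul_comm (X i _)]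
    exact hX.integral_mul_mul_eq_zero hmeas h0 hji hji
  · exact hX.integral_mul_mul_eq_zero hmeas h0 hik hjk

theorem integral_sum_mul_sum_mul_sum [Fintype ι] (hX : iIndepFun X μ)
    (hmeas : ∀ i, Measurable (X i)) (h0 : ∀ i, ∫ ω, X i ω ∂μ = 0) (h3 : ∀ i, MemLp (X i) 3 μ)
    (a b c : ι → ℝ) :
    ∫ ω, (∑ i, a i * X i ω) * (∑ i, b i * X i ω) * (∑ i, c i * X i ω) ∂μ =
      ∑ i, a i * b i * c i * ∫ ω, X i ω ^ 3 ∂μ := by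
  classical
  have hint (i j k : ι) (_ : k ∈ Finset.univ) :
      Integrable (fun ω => a i * b j * c k * (X i ω * X j ω * X k ω)) μ :=
    ((h3 i).integrable_mul_mul (h3 j) (h3 k)).const_mul _
  calc ∫ ω, (∑ i, a i * X i ω) * (∑ i, b i * X i ω) * (∑ i, c i * X i ω) ∂μ
      = ∫ ω, ∑ i, ∑ j, ∑ k, a i * b j * c k * (X i ω * X j ω * X k ω) ∂μ := by
        congr 1 with ω
        rw [Finset.sum_mul_sum, Finset.sum_mul]
        simp_rw [Finset.sum_mul_sum]
        exact Finset.sum_congr rfl fun i _ => Finset.sum_congr rfl fun j _ =>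
          Finset.sum_congr rfl fun k _ => by ring
    _ = ∑ i, ∑ j, ∑ k, a i * b j * c k * ∫ ω, X i ω * X j ω * X k ω ∂μ := by
        rw [integral_finsetSum _ fun i _ => integrable_finsetSum _ fun j _ =>
          integrable_finsetSum _ (hint i j)]
        refine Finset.sum_congr rfl fun i _ => ?_
        rw [integral_finsetSum _ fun j _ => integrable_finsetSum _ (hint i j)]
        refine Finset.sum_congr rfl fun j _ => ?_
        rw [integral_finsetSum _ (hint i j)]
        exact Finset.sum_congr rfl fun k _ => integral_const_mul _ _
    _ = ∑ i, a i * b i * c i * ∫ ω, X i ω ^ 3 ∂μ := by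
        simp [hX.integral_mul_mul hmeas h0, ite_and]

end ProbabilityTheory.iIndepFun

/-- In the error-in-variables model with finite third absolute moments
and β₀ · E[ξ³] ≠ 0, β₀ is the unique solution β of the population moment condition
E[x y² − β x² y] = 0. -/
theorem eiv_moment_condition_unique_solution
    {Ω : Type*} [MeasurableSpace Ω] (μ : Measure Ω) [IsProbabilityMeasure μ]
    (ξ ε u : Ω → ℝ) (β₀ : ℝ)
    (hmξ : Measurable ξ) (hmε : Measurable ε) (hmu : Measurable u)
    (hindep : iIndepFun ![ξ, ε, u] μ)
    (hξ0 : ∫ ω, ξ ω ∂μ = 0) (hε0 : ∫ ω, ε ω ∂μ = 0) (hu0 : ∫ ω, u ω ∂μ = 0)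
    (hξ3 : MemLp ξ 3 μ) (hε3 : MemLp ε 3 μ) (hu3 : MemLp u 3 μ)
    (hβξ : β₀ * ∫ ω, (ξ ω) ^ 3 ∂μ ≠ 0) :
    ∀ β : ℝ,
      (∫ ω, ((ξ ω + u ω) * (ξ ω * β₀ + ε ω) ^ 2
        - β * ((ξ ω + u ω) ^ 2 * (ξ ω * β₀ + ε ω))) ∂μ = 0) ↔ β = β₀ := by
  intro β
  have hmeas : ∀ i, Measurable (![ξ, ε, u] i) := by intro i; fin_cases i <;> assumption
  have h0 : ∀ i, ∫ ω, ![ξ, ε, u] i ω ∂μ = 0 := by intro i; fin_cases i <;> assumption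
  have h3 : ∀ i, MemLp (![ξ, ε, u] i) 3 μ := by intro i; fin_cases i <;> assumption
  have hmoment : ∫ ω, ((ξ ω + u ω) * (ξ ω * β₀ + ε ω) ^ 2
      - β * ((ξ ω + u ω) ^ 2 * (ξ ω * β₀ + ε ω))) ∂μ = β₀ * (β₀ - β) * ∫ ω, ξ ω ^ 3 ∂μ := by
    calc _ = ∫ ω, (∑ i, ![1, 0, 1] i * ![ξ, ε, u] i ω)
          * (∑ i, ![β₀ - β, 1, -β] i * ![ξ, ε, u] i ω)
          * (∑ i, ![β₀, 1, 0] i * ![ξ, ε, u] i ω) ∂μ := by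
          congr 1 with ω
          simp only [Fin.sum_univ_three, Matrix.cons_val]
          ring
      _ = β₀ * (β₀ - β) * ∫ ω, ξ ω ^ 3 ∂μ := by
          rw [hindep.integral_sum_mul_sum_mul_sum hmeas h0 h3]
          simp only [Fin.sum_univ_three, Matrix.cons_val]
          ring
  rw [hmoment, mul_right_comm, mul_eq_zero, or_iff_right hβξ, sub_eq_zero, eq_comm]
end

section
/- In the error-in-variables model with i.i.d. data, suppose ξ, ε, u have finite third absolute moments and β₀ · E[ξ³] ≠ 0. Then the third-order moment (Geary) estimator β̂ⁿ_3M = (Σ_{i=1}^n x_i y_i²)/(Σ_{i=1}^n x_i² y_i) converges in probability to β₀ as n → ∞. -/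
/-!
By the strong law of large numbers, `n⁻¹ ∑ xᵢ yᵢ²` and `n⁻¹ ∑ xᵢ² yᵢ` converge almost surely to
`E[x y²]` and `E[x² y]`; these exist by Hölder's inequality, as products of three `L³` variables.
Expanding `x = ξ + u`, `y = ξ β₀ + ε`, every term other than the `ξ³` one is of the form
`f² g` with `g` centred and independent of `f`, so `E[x y²] = β₀² E[ξ³]` and `E[x² y] = β₀ E[ξ³]`.
Hence the ratio converges almost surely, and so in probability, to `β₀`.
-/

open MeasureTheory ProbabilityTheory Filter
open scoped ENNReal

section

variable {Ω : Type*} [MeasurableSpace Ω] {μ : Measure Ω}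

lemma integrable_mul_mul_of_memLp_three {f g h : Ω → ℝ} (hf : MemLp f 3 μ) (hg : MemLp g 3 μ)
    (hh : MemLp h 3 μ) : Integrable (fun ω => f ω * g ω * h ω) μ := by
  have hexp : (∑ _i : Fin 3, (3 : ℝ≥0∞)⁻¹)⁻¹ = 1 := by
    rw [Finset.sum_const, Finset.card_univ, Fintype.card_fin, nsmul_eq_mul, Nat.cast_ofNat,
      ENNReal.mul_inv_cancel (by norm_num) (by norm_num), inv_one]
  have hprod : MemLp (fun ω => ∏ i : Fin 3, ![f, g, h] i ω) (∑ _i : Fin 3, (3 : ℝ≥0∞)⁻¹)⁻¹ μ :=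
    MemLp.prod' fun i _ => by fin_cases i <;> assumption
  rw [hexp, memLp_one_iff_integrable] at hprod
  simpa [Fin.prod_univ_three] using hprod

lemma ProbabilityTheory.IndepFun.integral_mul_self_mul_eq_zero {f g : Ω → ℝ}
    (hfg : IndepFun f g μ) (hf : AEStronglyMeasurable f μ) (hg : AEStronglyMeasurable g μ)
    (hg0 : ∫ ω, g ω ∂μ = 0) :
    ∫ ω, f ω * f ω * g ω ∂μ = 0 := by
  have hind : IndepFun (fun ω => f ω * f ω) g μ :=
    hfg.comp (φ := fun x => x * x) (ψ := id) (by fun_prop) measurable_id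
  rw [hind.integral_fun_mul_eq_mul_integral (hf.mul hf) hg, hg0, mul_zero]

section Moments

variable {X E U : Ω → ℝ}

lemma aemeasurable_vecCons_three (hX : AEMeasurable X μ) (hE : AEMeasurable E μ)
    (hU : AEMeasurable U μ) : ∀ i, AEMeasurable (![X, E, U] i) μ := fun i => by
  fin_cases i
  exacts [hX, hE, hU]

lemma integrable_geary_numerator (β : ℝ) (hX : MemLp X 3 μ) (hE : MemLp E 3 μ)
    (hU : MemLp U 3 μ) : Integrable (fun ω => (X ω + U ω) * (X ω * β + E ω) ^ 2) μ := by
  have hZ : MemLp (fun ω => X ω + U ω) 3 μ := hX.add hU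
  have hY : MemLp (fun ω => X ω * β + E ω) 3 μ := (hX.mul_const β).add hE
  simpa only [pow_two, mul_assoc] using integrable_mul_mul_of_memLp_three hZ hY hY

lemma integrable_geary_denominator (β : ℝ) (hX : MemLp X 3 μ) (hE : MemLp E 3 μ)
    (hU : MemLp U 3 μ) : Integrable (fun ω => (X ω + U ω) ^ 2 * (X ω * β + E ω)) μ := by
  have hZ : MemLp (fun ω => X ω + U ω) 3 μ := hX.add hU
  have hY : MemLp (fun ω => X ω * β + E ω) 3 μ := (hX.mul_const β).add hE
  simpa only [pow_two] using integrable_mul_mul_of_memLp_three hZ hZ hY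

lemma integral_geary_numerator (β : ℝ)
    (hindep : iIndepFun ![X, E, U] μ) (hX0 : ∫ ω, X ω ∂μ = 0) (hE0 : ∫ ω, E ω ∂μ = 0)
    (hU0 : ∫ ω, U ω ∂μ = 0) (hX : MemLp X 3 μ) (hE : MemLp E 3 μ) (hU : MemLp U 3 μ) :
    ∫ ω, (X ω + U ω) * (X ω * β + E ω) ^ 2 ∂μ = β ^ 2 * ∫ ω, X ω ^ 3 ∂μ := by
  have hY : MemLp (fun ω => X ω * β + E ω) 3 μ := (hX.mul_const β).add hE
  have hmeas := aemeasurable_vecCons_three hX.1.aemeasurable hE.1.aemeasurable hU.1.aemeasurable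
  have hXE : IndepFun X E μ := hindep.indepFun (show (0 : Fin 3) ≠ 1 by decide)
  have hYU : IndepFun (fun ω => X ω * β + E ω) U μ :=
    (hindep.indepFun_prodMk₀ hmeas 0 1 2 (by decide) (by decide)).comp
      (φ := fun p : ℝ × ℝ => p.1 * β + p.2) (by fun_prop) measurable_id
  have hXXE : ∫ ω, X ω * X ω * E ω ∂μ = 0 :=
    hXE.integral_mul_self_mul_eq_zero hX.1 hE.1 hE0
  have hEEX : ∫ ω, E ω * E ω * X ω ∂μ = 0 :=
    hXE.symm.integral_mul_self_mul_eq_zero hE.1 hX.1 hX0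
  have hYYU : ∫ ω, (X ω * β + E ω) * (X ω * β + E ω) * U ω ∂μ = 0 :=
    hYU.integral_mul_self_mul_eq_zero hY.1 hU.1 hU0
  calc ∫ ω, (X ω + U ω) * (X ω * β + E ω) ^ 2 ∂μ
      = ∫ ω, β ^ 2 * (X ω * X ω * X ω) + 2 * β * (X ω * X ω * E ω) + E ω * E ω * X ω
          + (X ω * β + E ω) * (X ω * β + E ω) * U ω ∂μ := by congr with ω; ring
    _ = β ^ 2 * ∫ ω, X ω * X ω * X ω ∂μ + 2 * β * ∫ ω, X ω * X ω * E ω ∂μ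
          + ∫ ω, E ω * E ω * X ω ∂μ
          + ∫ ω, (X ω * β + E ω) * (X ω * β + E ω) * U ω ∂μ := by
      have iXXX := (integrable_mul_mul_of_memLp_three hX hX hX).const_mul (β ^ 2)
      have iXXE := (integrable_mul_mul_of_memLp_three hX hX hE).const_mul (2 * β)
      have iEEX := integrable_mul_mul_of_memLp_three hE hE hX
      have iYYU := integrable_mul_mul_of_memLp_three hY hY hU
      rw [integral_add ((iXXX.fun_add iXXE).fun_add iEEX) iYYU,
        integral_add (iXXX.fun_add iXXE) iEEX, integral_add iXXX iXXE,
        integral_const_mul, integral_const_mul]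
    _ = β ^ 2 * ∫ ω, X ω ^ 3 ∂μ := by
      simp only [hXXE, hEEX, hYYU, ← pow_three']
      ring

lemma integral_geary_denominator (β : ℝ)
    (hindep : iIndepFun ![X, E, U] μ) (hX0 : ∫ ω, X ω ∂μ = 0) (hE0 : ∫ ω, E ω ∂μ = 0)
    (hU0 : ∫ ω, U ω ∂μ = 0) (hX : MemLp X 3 μ) (hE : MemLp E 3 μ) (hU : MemLp U 3 μ) :
    ∫ ω, (X ω + U ω) ^ 2 * (X ω * β + E ω) ∂μ = β * ∫ ω, X ω ^ 3 ∂μ := by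
  have hZ : MemLp (fun ω => X ω + U ω) 3 μ := hX.add hU
  have hmeas := aemeasurable_vecCons_three hX.1.aemeasurable hE.1.aemeasurable hU.1.aemeasurable
  have hXU : IndepFun X U μ := hindep.indepFun (show (0 : Fin 3) ≠ 2 by decide)
  have hZE : IndepFun (fun ω => X ω + U ω) E μ :=
    (hindep.indepFun_prodMk₀ hmeas 0 2 1 (by decide) (by decide)).comp
      (φ := fun p : ℝ × ℝ => p.1 + p.2) (by fun_prop) measurable_id
  have hXXU : ∫ ω, X ω * X ω * U ω ∂μ = 0 :=
    hXU.integral_mul_self_mul_eq_zero hX.1 hU.1 hU0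
  have hUUX : ∫ ω, U ω * U ω * X ω ∂μ = 0 :=
    hXU.symm.integral_mul_self_mul_eq_zero hU.1 hX.1 hX0
  have hZZE : ∫ ω, (X ω + U ω) * (X ω + U ω) * E ω ∂μ = 0 :=
    hZE.integral_mul_self_mul_eq_zero hZ.1 hE.1 hE0
  calc ∫ ω, (X ω + U ω) ^ 2 * (X ω * β + E ω) ∂μ
      = ∫ ω, β * (X ω * X ω * X ω) + 2 * β * (X ω * X ω * U ω) + β * (U ω * U ω * X ω)
          + (X ω + U ω) * (X ω + U ω) * E ω ∂μ := by congr with ω; ring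
    _ = β * ∫ ω, X ω * X ω * X ω ∂μ + 2 * β * ∫ ω, X ω * X ω * U ω ∂μ
          + β * ∫ ω, U ω * U ω * X ω ∂μ
          + ∫ ω, (X ω + U ω) * (X ω + U ω) * E ω ∂μ := by
      have iXXX := (integrable_mul_mul_of_memLp_three hX hX hX).const_mul β
      have iXXU := (integrable_mul_mul_of_memLp_three hX hX hU).const_mul (2 * β)
      have iUUX := (integrable_mul_mul_of_memLp_three hU hU hX).const_mul β
      have iZZE := integrable_mul_mul_of_memLp_three hZ hZ hE
      rw [integral_add ((iXXX.fun_add iXXU).fun_add iUUX) iZZE,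
        integral_add (iXXX.fun_add iXXU) iUUX, integral_add iXXX iXXU,
        integral_const_mul, integral_const_mul, integral_const_mul]
    _ = β * ∫ ω, X ω ^ 3 ∂μ := by
      simp only [hXXU, hUUX, hZZE, ← pow_three']
      ring

end Moments

theorem tendstoInMeasure_sum_div_sum [IsFiniteMeasure μ] {F G : ℕ → Ω → ℝ}
    (hF : Integrable (F 0) μ) (hG : Integrable (G 0) μ)
    (hFindep : Pairwise (Function.onFun (IndepFun · · μ) F))
    (hGindep : Pairwise (Function.onFun (IndepFun · · μ) G))
    (hFident : ∀ i, IdentDistrib (F i) (F 0) μ μ) (hGident : ∀ i, IdentDistrib (G i) (G 0) μ μ)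
    (hG0 : ∫ ω, G 0 ω ∂μ ≠ 0) :
    TendstoInMeasure μ (fun n ω => (∑ i ∈ Finset.range n, F i ω) / ∑ i ∈ Finset.range n, G i ω)
      atTop (fun _ => (∫ ω, F 0 ω ∂μ) / ∫ ω, G 0 ω ∂μ) := by
  have hmeas : ∀ {H : ℕ → Ω → ℝ}, (∀ i, IdentDistrib (H i) (H 0) μ μ) → Integrable (H 0) μ →
      ∀ n, AEMeasurable (fun ω => ∑ i ∈ Finset.range n, H i ω) μ := fun hident hint n =>
    Finset.aemeasurable_fun_sum _ fun i _ => ((hident i).integrable_iff.mpr hint).1.aemeasurable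
  refine tendstoInMeasure_of_tendsto_ae
    (fun n => ((hmeas hFident hF n).div (hmeas hGident hG n)).aestronglyMeasurable) ?_
  filter_upwards [strong_law_ae F hF hFindep hFident, strong_law_ae G hG hGindep hGident]
    with ω hFω hGω
  refine (hFω.div hGω hG0).congr' ?_
  filter_upwards [eventually_ne_atTop 0] with n hn
  simp only [smul_eq_mul]
  exact mul_div_mul_left _ _ (inv_ne_zero (Nat.cast_ne_zero.mpr hn))

end

theorem eiv_geary_consistent_general
    {Ω : Type*} [MeasurableSpace Ω] (μ : Measure Ω) [IsProbabilityMeasure μ]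
    (ξ ε u : ℕ → Ω → ℝ) (β₀ : ℝ)
    (hindep_seq : iIndepFun
      (fun i ω => (ξ i ω, ε i ω, u i ω)) μ)
    (hident : ∀ i, IdentDistrib (fun ω => (ξ i ω, ε i ω, u i ω))
      (fun ω => (ξ 0 ω, ε 0 ω, u 0 ω)) μ μ)
    (hindep0 : iIndepFun ![ξ 0, ε 0, u 0] μ)
    (hξ0 : ∫ ω, ξ 0 ω ∂μ = 0) (hε0 : ∫ ω, ε 0 ω ∂μ = 0) (hu0 : ∫ ω, u 0 ω ∂μ = 0)
    (hξ3 : MemLp (ξ 0) 3 μ) (hε3 : MemLp (ε 0) 3 μ) (hu3 : MemLp (u 0) 3 μ)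
    (hβξ : β₀ * ∫ ω, (ξ 0 ω) ^ 3 ∂μ ≠ 0) :
    TendstoInMeasure μ
      (fun n ω => (∑ i ∈ Finset.range n, (ξ i ω + u i ω) * (ξ i ω * β₀ + ε i ω) ^ 2) /
        (∑ i ∈ Finset.range n, (ξ i ω + u i ω) ^ 2 * (ξ i ω * β₀ + ε i ω)))
      atTop (fun _ => β₀) := by
  let num : ℝ × ℝ × ℝ → ℝ := fun p => (p.1 + p.2.2) * (p.1 * β₀ + p.2.1) ^ 2
  let den : ℝ × ℝ × ℝ → ℝ := fun p => (p.1 + p.2.2) ^ 2 * (p.1 * β₀ + p.2.1)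
  have hnum : Measurable num := by fun_prop
  have hden : Measurable den := by fun_prop
  have hnum0 := integral_geary_numerator β₀ hindep0 hξ0 hε0 hu0 hξ3 hε3 hu3
  have hden0 := integral_geary_denominator β₀ hindep0 hξ0 hε0 hu0 hξ3 hε3 hu3
  have key := tendstoInMeasure_sum_div_sum (μ := μ)
    (F := fun i ω => num (ξ i ω, ε i ω, u i ω)) (G := fun i ω => den (ξ i ω, ε i ω, u i ω))
    (integrable_geary_numerator β₀ hξ3 hε3 hu3) (integrable_geary_denominator β₀ hξ3 hε3 hu3)
    (fun i j hij => (hindep_seq.indepFun hij).comp hnum hnum)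
    (fun i j hij => (hindep_seq.indepFun hij).comp hden hden)
    (fun i => (hident i).comp hnum) (fun i => (hident i).comp hden)
    (by simpa only [den, hden0] using hβξ)
  convert key using 2
  simp only [num, den, hnum0, hden0]
  rw [pow_two, mul_assoc, mul_div_cancel_right₀ _ hβξ]

/-- In the error-in-variables model with i.i.d. data, finite third
absolute moments and β₀ · E[ξ³] ≠ 0, the third-order moment (Geary) estimator
(Σ x_i y_i²)/(Σ x_i² y_i) converges in probability to β₀. -/
theorem eiv_geary_consistent
    {Ω : Type*} [MeasurableSpace Ω] (μ : Measure Ω) [IsProbabilityMeasure μ]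
    (ξ ε u : ℕ → Ω → ℝ) (β₀ : ℝ)
    (hmξ : ∀ i, Measurable (ξ i)) (hmε : ∀ i, Measurable (ε i))
    (hmu : ∀ i, Measurable (u i))
    (hindep_seq : iIndepFun
      (fun i ω => (ξ i ω, ε i ω, u i ω)) μ)
    (hident : ∀ i, IdentDistrib (fun ω => (ξ i ω, ε i ω, u i ω))
      (fun ω => (ξ 0 ω, ε 0 ω, u 0 ω)) μ μ)
    (hindep0 : iIndepFun ![ξ 0, ε 0, u 0] μ)
    (hξ0 : ∫ ω, ξ 0 ω ∂μ = 0) (hε0 : ∫ ω, ε 0 ω ∂μ = 0) (hu0 : ∫ ω, u 0 ω ∂μ = 0)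
    (hξ3 : MemLp (ξ 0) 3 μ) (hε3 : MemLp (ε 0) 3 μ) (hu3 : MemLp (u 0) 3 μ)
    (hβξ : β₀ * ∫ ω, (ξ 0 ω) ^ 3 ∂μ ≠ 0) :
    TendstoInMeasure μ
      (fun n ω => (∑ i ∈ Finset.range n, (ξ i ω + u i ω) * (ξ i ω * β₀ + ε i ω) ^ 2) /
        (∑ i ∈ Finset.range n, (ξ i ω + u i ω) ^ 2 * (ξ i ω * β₀ + ε i ω)))
      atTop (fun _ => β₀) :=
  eiv_geary_consistent_general μ ξ ε u β₀ hindep_seq hident hindep0 hξ0 hε0 hu0 hξ3 hε3 hu3 hβξ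
end

section
/- For every constant C > 0 there exists a constant M > 0 (depending only on C) with the following property: for every δ ∈ (0, 1] and every pair of independent real-valued random variables V and W, each having a continuous (atomless) distribution, such that sup_{x∈ℝ} |P(V ≤ x) − Φ(x)| ≤ Cδ and sup_{x∈ℝ} |P(W ≤ x) − Φ(x)| ≤ Cδ, one has sup_{x∈ℝ} |P(V/W ≤ x) − F_c(x)| ≤ Mδ, where F_c is the standard Cauchy CDF. -/
open MeasureTheory ProbabilityTheory Filter Real Topology Set

/-!
Write `ν`, `ρ` for the laws of `V`, `W`, `γ` for the standard Gaussian and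
`T = {(v, w) | v / w ≤ x}`, so that `P(V / W ≤ x) = (ν ⊗ ρ)(T)`. For fixed `w` the slice
`{v | v / w ≤ x}` is a half-line, so replacing `ν` by `γ` moves `(ν ⊗ ρ)(T)` by at most `Cδ`;
for fixed `v` the slice `{w | v / w ≤ x}` is, up to endpoints, a half-line, an interval or the
complement of an interval, so replacing `ρ` by `γ` costs at most `2Cδ`. Since the laws have no
atoms, endpoints do not matter and each of these measures is read off from the CDF. Finally
`(γ ⊗ γ)(T) = ∫ Φ(x|w|) dγ(w)`, whose derivative in `x` is `∫ |w| φ(x w) dγ(w) = 1 / (π (1 + x²))`,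
the Cauchy density; hence `M = 3C` works.
-/

lemma abs_integral_sub_integral_le {α : Type*} [MeasurableSpace α] {ρ : Measure α}
    [IsProbabilityMeasure ρ] {f g : α → ℝ} {ε : ℝ} (hf : Integrable f ρ) (hg : Integrable g ρ)
    (h : ∀ a, |f a - g a| ≤ ε) : |∫ a, f a ∂ρ - ∫ a, g a ∂ρ| ≤ ε := by
  rw [← integral_sub hf hg]
  simpa using norm_integral_le_of_norm_le_const (μ := ρ) (f := fun a => f a - g a)
    (Eventually.of_forall h)

section Product

variable {α β : Type*} [MeasurableSpace α] [MeasurableSpace β] {s : Set (α × β)}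

lemma measureReal_prod_apply (μ : Measure α) [SFinite μ] (ν : Measure β) [IsFiniteMeasure ν]
    (hs : MeasurableSet s) : (μ.prod ν).real s = ∫ a, ν.real (Prod.mk a ⁻¹' s) ∂μ := by
  rw [measureReal_def, Measure.prod_apply hs, ← integral_toReal
    (measurable_measure_prodMk_left hs).aemeasurable (ae_of_all _ fun _ => measure_lt_top _ _)]
  rfl

lemma measureReal_prod_apply_symm (μ : Measure α) [IsFiniteMeasure μ] (ν : Measure β) [SFinite ν]
    (hs : MeasurableSet s) : (μ.prod ν).real s = ∫ b, μ.real ((·, b) ⁻¹' s) ∂ν := by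
  rw [measureReal_def, Measure.prod_apply_symm hs, ← integral_toReal
    (measurable_measure_prodMk_right hs).aemeasurable (ae_of_all _ fun _ => measure_lt_top _ _)]
  rfl

variable {ε : ℝ}

lemma abs_measureReal_prod_sub_prod_le_left {κ₁ κ₂ : Measure α} [IsProbabilityMeasure κ₁]
    [IsProbabilityMeasure κ₂] (ρ : Measure β) [IsProbabilityMeasure ρ] (hs : MeasurableSet s)
    (h : ∀ b, |κ₁.real ((·, b) ⁻¹' s) - κ₂.real ((·, b) ⁻¹' s)| ≤ ε) :
    |(κ₁.prod ρ).real s - (κ₂.prod ρ).real s| ≤ ε := by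
  rw [measureReal_prod_apply_symm _ _ hs, measureReal_prod_apply_symm _ _ hs]
  refine abs_integral_sub_integral_le ?_ ?_ h <;>
  exact .of_bound (measurable_measure_prodMk_right hs).ennreal_toReal.aestronglyMeasurable 1
    (ae_of_all _ fun _ => by simp [abs_of_nonneg, measureReal_le_one])

lemma abs_measureReal_prod_sub_prod_le_right (ρ : Measure α) [IsProbabilityMeasure ρ]
    {κ₁ κ₂ : Measure β} [IsProbabilityMeasure κ₁] [IsProbabilityMeasure κ₂] (hs : MeasurableSet s)
    (h : ∀ a, |κ₁.real (Prod.mk a ⁻¹' s) - κ₂.real (Prod.mk a ⁻¹' s)| ≤ ε) :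
    |(ρ.prod κ₁).real s - (ρ.prod κ₂).real s| ≤ ε := by
  rw [measureReal_prod_apply _ _ hs, measureReal_prod_apply _ _ hs]
  refine abs_integral_sub_integral_le ?_ ?_ h <;>
  exact .of_bound (measurable_measure_prodMk_left hs).ennreal_toReal.aestronglyMeasurable 1
    (ae_of_all _ fun _ => by simp [abs_of_nonneg, measureReal_le_one])

end Product

lemma abs_measureReal_compl_sub_compl {α : Type*} [MeasurableSpace α] {κ₁ κ₂ : Measure α}
    [IsProbabilityMeasure κ₁] [IsProbabilityMeasure κ₂] {s : Set α} (hs : MeasurableSet s) :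
    |κ₁.real sᶜ - κ₂.real sᶜ| = |κ₁.real s - κ₂.real s| := by
  rw [probReal_compl_eq_one_sub hs, probReal_compl_eq_one_sub hs, ← abs_neg]
  ring_nf

lemma setOf_one_lt_div_eq_Ioo (u : ℝ) : {w : ℝ | 1 < u / w} = Ioo (min u 0) (max u 0) := by
  ext w
  simp only [mem_ofPred, mem_Ioo, min_lt_iff, lt_max_iff]
  rcases lt_trichotomy w 0 with hw | rfl | hw
  · rw [one_lt_div_of_neg hw]
    constructor
    · intro h; exact ⟨.inl h, .inr hw⟩
    · rintro ⟨h | h, -⟩ <;> linarith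
  · norm_num
    intro h
    linarith
  · rw [one_lt_div hw]
    constructor
    · intro h; exact ⟨.inr hw, .inl h⟩
    · rintro ⟨-, h | h⟩ <;> linarith

lemma measureReal_setOf_one_le_div (κ : Measure ℝ) [NullSingletonClass κ] (u : ℝ) :
    κ.real {w | 1 ≤ u / w} = κ.real {w | 1 < u / w} := by
  have hsplit : {w : ℝ | 1 ≤ u / w} = {w | u / w = 1} ∪ {w | 1 < u / w} := by
    ext w; simp [le_iff_lt_or_eq, eq_comm, or_comm]
  have hsub : {w : ℝ | u / w = 1} ⊆ {u} := fun w hw => by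
    have hw0 : w ≠ 0 := by rintro rfl; simp at hw
    exact mem_singleton_iff.2 ((div_eq_one_iff_eq hw0).1 hw).symm
  rw [hsplit, measureReal_congr (union_ae_eq_right.2
    (measure_mono_null (sdiff_subset.trans hsub) (measure_singleton u)))]

section KolmogorovClose

variable {κ₁ κ₂ : Measure ℝ} [IsProbabilityMeasure κ₁] [IsProbabilityMeasure κ₂]
  [NullSingletonClass κ₁] [NullSingletonClass κ₂] {ε : ℝ}

lemma abs_measureReal_Ici_sub_le (hF : ∀ t, |κ₁.real (Iic t) - κ₂.real (Iic t)| ≤ ε) (t : ℝ) :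
    |κ₁.real (Ici t) - κ₂.real (Ici t)| ≤ ε := by
  rw [← measureReal_congr Ioi_ae_eq_Ici, ← measureReal_congr Ioi_ae_eq_Ici, ← compl_Iic,
    abs_measureReal_compl_sub_compl measurableSet_Iic]
  exact hF t

lemma abs_measureReal_Ioo_sub_le (hF : ∀ t, |κ₁.real (Iic t) - κ₂.real (Iic t)| ≤ ε) (a b : ℝ) :
    |κ₁.real (Ioo a b) - κ₂.real (Ioo a b)| ≤ 2 * ε := by
  rcases le_or_gt a b with hab | hba
  · have h (κ : Measure ℝ) [IsProbabilityMeasure κ] [NullSingletonClass κ] :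
        κ.real (Ioo a b) = κ.real (Iic b) - κ.real (Iic a) := by
      rw [measureReal_congr Ioo_ae_eq_Ioc, ← Iic_union_Ioc_eq_Iic hab,
        measureReal_union (Iic_disjoint_Ioc le_rfl) measurableSet_Ioc, add_sub_cancel_left]
    have ha := abs_le.1 (hF a)
    have hb := abs_le.1 (hF b)
    rw [h, h, abs_le]
    constructor <;> linarith
  · rw [Ioo_eq_empty hba.not_gt]
    simpa using (abs_nonneg _).trans (hF 0)

lemma abs_measureReal_setOf_mul_le_sub_le (hF : ∀ t, |κ₁.real (Iic t) - κ₂.real (Iic t)| ≤ ε)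
    (a b : ℝ) : |κ₁.real {y | y * a ≤ b} - κ₂.real {y | y * a ≤ b}| ≤ ε := by
  rcases lt_trichotomy a 0 with ha | rfl | ha
  · have hset : {y | y * a ≤ b} = Ici (b / a) := by ext y; exact (div_le_iff_of_neg ha).symm
    rw [hset]
    exact abs_measureReal_Ici_sub_le hF _
  · by_cases hb : 0 ≤ b <;> simpa [hb] using (abs_nonneg _).trans (hF 0)
  · have hset : {y | y * a ≤ b} = Iic (b / a) := by ext y; exact (le_div_iff₀ ha).symm
    rw [hset]
    exact hF _

lemma abs_measureReal_setOf_div_const_le_sub_le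
    (hF : ∀ t, |κ₁.real (Iic t) - κ₂.real (Iic t)| ≤ ε) (w x : ℝ) :
    |κ₁.real {v | v / w ≤ x} - κ₂.real {v | v / w ≤ x}| ≤ ε := by
  simpa only [div_eq_mul_inv] using abs_measureReal_setOf_mul_le_sub_le hF w⁻¹ x

lemma abs_measureReal_setOf_const_div_le_sub_le
    (hF : ∀ t, |κ₁.real (Iic t) - κ₂.real (Iic t)| ≤ ε) (v x : ℝ) :
    |κ₁.real {w | v / w ≤ x} - κ₂.real {w | v / w ≤ x}| ≤ 2 * ε := by
  rcases lt_trichotomy x 0 with hx | rfl | hx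
  · have hset : {w | v / w ≤ x} = {w | 1 ≤ v / x / w} := by
      ext w
      rw [mem_ofPred, mem_ofPred, div_right_comm, le_div_iff_of_neg hx, one_mul]
    rw [hset, measureReal_setOf_one_le_div, measureReal_setOf_one_le_div,
      setOf_one_lt_div_eq_Ioo]
    exact abs_measureReal_Ioo_sub_le hF _ _
  · have hset : {w | v / w ≤ 0} = {w | w * v ≤ 0} := by
      ext w
      simp only [mem_ofPred, div_nonpos_iff, mul_nonpos_iff]
      tauto
    have hε : 0 ≤ ε := (abs_nonneg _).trans (hF 0)
    rw [hset]
    linarith [abs_measureReal_setOf_mul_le_sub_le hF v 0]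
  · have hset : {w | v / w ≤ x} = {w | 1 < v / x / w}ᶜ := by
      ext w
      rw [mem_compl_iff, mem_ofPred, mem_ofPred, not_lt, div_right_comm, div_le_one hx]
    rw [hset, setOf_one_lt_div_eq_Ioo, abs_measureReal_compl_sub_compl measurableSet_Ioo]
    exact abs_measureReal_Ioo_sub_le hF _ _

end KolmogorovClose

lemma measureReal_Ici_eq_one_sub_cdf (κ : Measure ℝ) [IsProbabilityMeasure κ]
    [NullSingletonClass κ] (t : ℝ) : κ.real (Ici t) = 1 - cdf κ t := by
  rw [← measureReal_congr Ioi_ae_eq_Ici, ← compl_Iic, probReal_compl_eq_one_sub measurableSet_Iic,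
    cdf_eq_real]

local notation "γ" => gaussianReal 0 1
local notation "Φ" => cdf (gaussianReal 0 1)
local notation "φ" => gaussianPDFReal 0 1

instance : NullSingletonClass γ := nullSingletonClass_gaussianReal one_ne_zero

lemma measureReal_gaussianReal_Ici (t : ℝ) : (γ).real (Ici t) = Φ (-t) := by
  have hneg : (γ).map (fun x => -x) = γ := by rw [gaussianReal_map_neg, neg_zero]
  rw [cdf_eq_real]
  conv_rhs => rw [← hneg]
  rw [map_measureReal_apply measurable_neg measurableSet_Iic, neg_preimage, neg_Iic,
    neg_neg]

lemma cdf_gaussianReal_neg (t : ℝ) : Φ (-t) = 1 - Φ t := by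
  rw [← measureReal_gaussianReal_Ici, measureReal_Ici_eq_one_sub_cdf]

lemma cdf_gaussianReal_zero : Φ 0 = 1 / 2 := by
  linarith [neg_zero (G := ℝ) ▸ cdf_gaussianReal_neg 0]

lemma cdf_gaussianReal_eq_integral (t : ℝ) : Φ t = ∫ x in Iic t, φ x := by
  rw [cdf_eq_real, measureReal_def, gaussianReal_apply_eq_integral _ one_ne_zero,
    ENNReal.toReal_ofReal
      (setIntegral_nonneg measurableSet_Iic fun x _ => gaussianPDFReal_nonneg _ _ _)]

lemma continuous_gaussianPDFReal (m : ℝ) (v : NNReal) : Continuous (gaussianPDFReal m v) := by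
  rw [gaussianPDFReal_def]
  fun_prop

lemma hasDerivAt_cdf_gaussianReal (t : ℝ) : HasDerivAt Φ (φ t) t := by
  have hint := integrable_gaussianPDFReal 0 1
  have hΦ : Φ = fun u => Φ 0 + ∫ x in 0..u, φ x := by
    funext u
    rw [cdf_gaussianReal_eq_integral, cdf_gaussianReal_eq_integral,
      ← intervalIntegral.integral_Iic_sub_Iic hint.integrableOn hint.integrableOn]
    ring
  rw [hΦ]
  exact (intervalIntegral.integral_hasDerivAt_right hint.intervalIntegrable
    hint.aestronglyMeasurable.stronglyMeasurableAtFilter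
    (continuous_gaussianPDFReal 0 1).continuousAt).const_add _

lemma gaussianPDFReal_le_one (t : ℝ) : φ t ≤ 1 := by
  simp only [gaussianPDFReal_def]
  have h2π : 1 ≤ √(2 * π * (1 : NNReal)) := by
    rw [NNReal.coe_one, mul_one, one_le_sqrt]
    linarith [pi_gt_three]
  have hexp : rexp (-(t - 0) ^ 2 / (2 * (1 : NNReal))) ≤ 1 := by
    rw [exp_le_one_iff]
    have := sq_nonneg (t - 0)
    push_cast
    linarith
  exact mul_le_one₀ (inv_le_one_of_one_le₀ h2π) (exp_pos _).le hexp

lemma measureReal_gaussianReal_setOf_div_le {w : ℝ} (hw : w ≠ 0) (x : ℝ) :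
    (γ).real {v | v / w ≤ x} = Φ (x * |w|) := by
  rcases hw.lt_or_gt with hw | hw
  · have hset : {v | v / w ≤ x} = Ici (x * w) := by ext v; exact div_le_iff_of_neg hw
    rw [hset, measureReal_gaussianReal_Ici, abs_of_neg hw, mul_neg]
  · have hset : {v | v / w ≤ x} = Iic (x * w) := by ext v; exact div_le_iff₀ hw
    rw [hset, abs_of_pos hw, cdf_eq_real]

lemma measureReal_gaussianReal_prod_setOf_div_le (x : ℝ) :
    ((γ).prod γ).real {p : ℝ × ℝ | p.1 / p.2 ≤ x} = ∫ w, Φ (x * |w|) ∂γ := by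
  rw [measureReal_prod_apply_symm _ _ (measurableSet_le (by fun_prop) (by fun_prop))]
  refine integral_congr_ae ?_
  filter_upwards [Measure.ae_ne γ 0] with w hw
  exact measureReal_gaussianReal_setOf_div_le hw x

lemma integral_Ioi_mul_exp_neg_mul_sq {b : ℝ} (hb : 0 < b) :
    ∫ w in Ioi (0 : ℝ), w * rexp (-b * w ^ 2) = (2 * b)⁻¹ := by
  have h := integral_mul_cexp_neg_mul_sq (b := (b : ℂ)) (by simpa using hb)
  rw [← Complex.ofReal_inj, ← integral_complex_ofReal]
  push_cast
  exact h

lemma integral_abs_mul_exp_neg_mul_sq {b : ℝ} (hb : 0 < b) :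
    ∫ w, |w| * rexp (-b * w ^ 2) = b⁻¹ := by
  have h := integral_comp_abs (f := fun w => w * rexp (-b * w ^ 2))
  simp only [sq_abs] at h
  rw [h, integral_Ioi_mul_exp_neg_mul_sq hb]
  field_simp

lemma integral_abs_mul_gaussianPDFReal_mul_abs (x : ℝ) :
    ∫ w, |w| * φ (x * |w|) ∂γ = 1 / (1 + x ^ 2) / π := by
  have hpdf (w : ℝ) : φ w * (|w| * φ (x * |w|))
      = (2 * π)⁻¹ * (|w| * rexp (-((1 + x ^ 2) / 2) * w ^ 2)) := by
    have hsq : (√(2 * π))⁻¹ * (√(2 * π))⁻¹ = (2 * π)⁻¹ := by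
      rw [← mul_inv, mul_self_sqrt (by positivity)]
    simp only [gaussianPDFReal_def, NNReal.coe_one, mul_one, sub_zero, mul_pow, sq_abs]
    rw [← hsq]
    have he : rexp (-w ^ 2 / 2) * rexp (-(x ^ 2 * w ^ 2) / 2)
        = rexp (-((1 + x ^ 2) / 2) * w ^ 2) := by
      rw [← exp_add]; ring_nf
    rw [← he]
    ring
  simp_rw [integral_gaussianReal_eq_integral_smul one_ne_zero, smul_eq_mul, hpdf,
    integral_const_mul, integral_abs_mul_exp_neg_mul_sq (by positivity : 0 < (1 + x ^ 2) / 2)]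
  field_simp

lemma hasDerivAt_integral_cdf_gaussianReal_mul_abs (x₀ : ℝ) :
    HasDerivAt (fun x => ∫ w, Φ (x * |w|) ∂γ) (∫ w, |w| * φ (x₀ * |w|) ∂γ) x₀ := by
  have hmeas (x : ℝ) : AEStronglyMeasurable (fun w => Φ (x * |w|)) γ :=
    ((monotone_cdf γ).measurable.comp (by fun_prop)).aestronglyMeasurable
  have hderiv (w x : ℝ) : HasDerivAt (fun x => Φ (x * |w|)) (|w| * φ (x * |w|)) x :=
    ((hasDerivAt_cdf_gaussianReal (x * |w|)).comp x (hasDerivAt_mul_const |w|)).congr_deriv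
      (mul_comm _ _)
  have hbound (w x : ℝ) : ‖|w| * φ (x * |w|)‖ ≤ |w| := by
    rw [norm_mul, Real.norm_eq_abs, abs_abs, Real.norm_of_nonneg (gaussianPDFReal_nonneg _ _ _)]
    exact mul_le_of_le_one_right (abs_nonneg w) (gaussianPDFReal_le_one _)
  exact (hasDerivAt_integral_of_dominated_loc_of_deriv_le univ_mem
    (Eventually.of_forall hmeas)
    (.of_bound (hmeas x₀) 1 (ae_of_all _ fun w => by
      rw [Real.norm_of_nonneg (cdf_nonneg _ _)]; exact cdf_le_one _ _))
    (by fun_prop) (ae_of_all _ fun w x _ => hbound w x)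
    ((memLp_id_gaussianReal 1).integrable le_rfl).abs
    (ae_of_all _ fun w x _ => hderiv w x)).2

lemma measureReal_gaussianReal_prod_setOf_div_le_eq (x : ℝ) :
    ((γ).prod γ).real {p : ℝ × ℝ | p.1 / p.2 ≤ x} = 1 / 2 + arctan x / π := by
  set K : ℝ → ℝ := fun x => ∫ w, Φ (x * |w|) ∂γ
  have hderiv (y : ℝ) : HasDerivAt (fun x => K x - (1 / 2 + arctan x / π)) 0 y := by
    have hK := hasDerivAt_integral_cdf_gaussianReal_mul_abs y
    rw [integral_abs_mul_gaussianPDFReal_mul_abs] at hK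
    exact (hK.sub (((hasDerivAt_arctan y).div_const π).const_add (1 / 2))).congr_deriv (sub_self _)
  have hK0 : K 0 = 1 / 2 := by simp [K, cdf_gaussianReal_zero]
  have hconst := is_const_of_deriv_eq_zero (fun y => (hderiv y).differentiableAt)
    (fun y => (hderiv y).deriv) x 0
  rw [measureReal_gaussianReal_prod_setOf_div_le]
  show K x = _
  simp only [hK0, arctan_zero, zero_div] at hconst
  linarith

/-- For every C > 0 there is an M > 0 (depending only on C) such that:
for all δ ∈ (0,1] and all independent real random variables V, W with atomless
distributions whose CDFs are uniformly within Cδ of the standard normal CDF Φ,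
the CDF of V/W is uniformly within Mδ of the standard Cauchy CDF
F_c(x) = 1/2 + arctan(x)/π. -/
theorem ratio_near_normal_is_near_cauchy :
    ∀ C : ℝ, 0 < C → ∃ M : ℝ, 0 < M ∧
      ∀ (δ : ℝ), 0 < δ → δ ≤ 1 →
      ∀ (Ω : Type) [MeasurableSpace Ω] (μ : Measure Ω) [IsProbabilityMeasure μ]
        (V W : Ω → ℝ), Measurable V → Measurable W → IndepFun V W μ →
        (∀ c : ℝ, μ {ω | V ω = c} = 0) →
        (∀ c : ℝ, μ {ω | W ω = c} = 0) →
        (∀ x : ℝ, |(μ {ω | V ω ≤ x}).toReal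
          - ((gaussianReal 0 1) (Set.Iic x)).toReal| ≤ C * δ) →
        (∀ x : ℝ, |(μ {ω | W ω ≤ x}).toReal
          - ((gaussianReal 0 1) (Set.Iic x)).toReal| ≤ C * δ) →
        ∀ x : ℝ, |(μ {ω | V ω / W ω ≤ x}).toReal
          - (1 / 2 + Real.arctan x / π)| ≤ M * δ := by
  intro C hC
  refine ⟨3 * C, by positivity, fun δ _ _ Ω _ μ _ V W hV hW hVW hV₀ hW₀ hFV hFW x => ?_⟩
  have := Measure.isProbabilityMeasure_map (μ := μ) hV.aemeasurable
  have := Measure.isProbabilityMeasure_map (μ := μ) hW.aemeasurable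
  have : NullSingletonClass (μ.map V) :=
    ⟨fun c => by rw [Measure.map_apply hV (measurableSet_singleton c)]; exact hV₀ c⟩
  have : NullSingletonClass (μ.map W) :=
    ⟨fun c => by rw [Measure.map_apply hW (measurableSet_singleton c)]; exact hW₀ c⟩
  have hFV' (t : ℝ) : |(μ.map V).real (Iic t) - (γ).real (Iic t)| ≤ C * δ := by
    rw [map_measureReal_apply hV measurableSet_Iic]; exact hFV t
  have hFW' (t : ℝ) : |(μ.map W).real (Iic t) - (γ).real (Iic t)| ≤ C * δ := by
    rw [map_measureReal_apply hW measurableSet_Iic]; exact hFW t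
  have hT : MeasurableSet {p : ℝ × ℝ | p.1 / p.2 ≤ x} :=
    measurableSet_le (by fun_prop) (by fun_prop)
  have hlaw : (μ {ω | V ω / W ω ≤ x}).toReal
      = ((μ.map V).prod (μ.map W)).real {p | p.1 / p.2 ≤ x} := by
    rw [← (indepFun_iff_map_prod_eq_prod_map_map hV.aemeasurable hW.aemeasurable).1 hVW,
      map_measureReal_apply (hV.prodMk hW) hT]
    rfl
  have hfirst := abs_measureReal_prod_sub_prod_le_left (μ.map W) hT
    fun w => abs_measureReal_setOf_div_const_le_sub_le hFV' w x
  have hsecond := abs_measureReal_prod_sub_prod_le_right γ hT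
    fun v => abs_measureReal_setOf_const_div_le_sub_le hFW' v x
  rw [hlaw, ← measureReal_gaussianReal_prod_setOf_div_le_eq x]
  calc _ ≤ _ := abs_sub_le _ (((γ).prod (μ.map W)).real {p | p.1 / p.2 ≤ x}) _
    _ ≤ C * δ + 2 * (C * δ) := add_le_add hfirst hsecond
    _ = 3 * C * δ := by ring
end

section
/- (Median CLT for triangular arrays with perturbed distributions.) Let G : ℝ → [0,1] be a CDF with G(0) = 1/2 that is differentiable at 0 with derivative g = G′(0) > 0. Let b ↦ B(b) be odd positive integers with B(b) → ∞ and B(b)/b → 0 as b → ∞, and let M > 0. For each b, let X_{1,b}, …, X_{B(b),b} be i.i.d. real random variables whose common CDF F_b satisfies sup_{x∈ℝ} |F_b(x) − G(x)| ≤ M/√b. Then √(B(b)) · median(X_{1,b}, …, X_{B(b),b}) converges in distribution, as b → ∞, to the centered normal distribution N(0, 1/(4g²)). -/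
/-!
The event `√B · median ≤ t` says that at least `n + 1` of the `B = 2n + 1` samples lie below
`t / √B`, so its probability is a binomial tail in `p = F_b(t / √B)`. Its derivative in `p`
telescopes, which turns the tail into the incomplete beta ratio
`∫₀ᵖ (x(1-x))ⁿ dx / ∫₀¹ (x(1-x))ⁿ dx`, and the substitution `x = 1/2 + u / (2√n)` rewrites this as
`∫_{-√n}^{s} (1 - u²/n)ⁿ du / ∫_{-√n}^{√n} (1 - u²/n)ⁿ du` with `s = 2√n (p - 1/2)`.
Since `0 ≤ (1 - u²/n)ⁿ ≤ exp (-u²)` on `[-√n, √n]`, dominated convergence gives the limit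
`∫_{-∞}^{L} exp (-u²) du / √π` whenever `s → L`, and for `L = √2 g t` this is the
`N(0, 1/(4g²))` distribution function at `t`. Finally `s → √2 g t`, because `2√n / √B → √2`,
`√B (G(t/√B) - 1/2) → g t` by differentiability of `G` at `0`, and
`√B |p - G(t/√B)| ≤ M √(B/b) → 0`.
-/

open MeasureTheory ProbabilityTheory Filter Real Topology

/-- The median of a tuple of `B` real numbers: its `((B+1)/2)`-th smallest value
(1-indexed), obtained by sorting the values in nondecreasing order. -/
noncomputable def medianFin {B : ℕ} (v : Fin B → ℝ) : ℝ :=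
  (Multiset.sort (Multiset.map v Finset.univ.val) (· ≤ ·)).getD ((B + 1) / 2 - 1) 0

open Finset
open scoped ENNReal NNReal

theorem List.Pairwise.getElem_le_iff_lt_countP {α : Type*} [LinearOrder α] {l : List α}
    (hl : l.Pairwise (· ≤ ·)) {i : ℕ} (hi : i < l.length) (c : α) :
    l[i] ≤ c ↔ i < l.countP (· ≤ c) := by
  have mono : ∀ {j k} (hj : j ≤ k) (hk : k < l.length), l[j] ≤ l[k] := fun hj hk =>
    hl.rel_get_of_le (a := ⟨_, hj.trans_lt hk⟩) (b := ⟨_, hk⟩) hj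
  constructor
  · intro h
    have hprefix : (l.take (i + 1)).countP (· ≤ c) = i + 1 := by
      rw [List.countP_eq_length.2, List.length_take_of_le hi]
      intro x hx
      obtain ⟨j, hj, rfl⟩ := List.mem_iff_getElem.1 hx
      simp only [List.length_take_of_le hi] at hj
      simpa [List.getElem_take] using (mono (by omega) hi).trans h
    have := List.countP_append (l₁ := l.take (i + 1)) (l₂ := l.drop (i + 1)) (p := (· ≤ c))
    rw [List.take_append_drop] at this
    omega
  · intro h
    by_contra! hc
    have hsuffix : (l.drop i).countP (· ≤ c) = 0 := by
      rw [List.countP_eq_zero]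
      intro x hx
      obtain ⟨j, hj, rfl⟩ := List.mem_iff_getElem.1 hx
      simp only [List.length_drop] at hj
      simpa [List.getElem_drop] using hc.trans_le (mono (by omega) (by omega))
    have := List.countP_append (l₁ := l.take i) (l₂ := l.drop i) (p := (· ≤ c))
    rw [List.take_append_drop] at this
    have := (l.take i).countP_le_length (p := (· ≤ c))
    simp only [List.length_take_of_le hi.le] at this
    omega

theorem medianFin_le_iff {B : ℕ} (hB : Odd B) (v : Fin B → ℝ) (c : ℝ) :
    medianFin v ≤ c ↔ (B + 1) / 2 ≤ #{j | v j ≤ c} := by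
  obtain ⟨k, rfl⟩ := hB
  set l := Multiset.sort (Multiset.map v Finset.univ.val) (· ≤ ·)
  have hlen : l.length = 2 * k + 1 := by simp [l]
  have hcount : l.countP (· ≤ c) = #{j | v j ≤ c} := by
    rw [← Multiset.coe_countP, Multiset.sort_eq, Multiset.countP_map]
    rfl
  rw [medianFin, show (2 * k + 1 + 1) / 2 - 1 = k by omega,
    List.getD_eq_getElem _ _ (show k < l.length by omega),
    (Multiset.pairwise_sort _ _).getElem_le_iff_lt_countP, hcount]
  omega

theorem Finset.sum_card_ge_eq_sum_choose {ι M : Type*} [Fintype ι] [AddCommMonoid M]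
    (f : ℕ → M) (m : ℕ) :
    ∑ s : Finset ι with m ≤ #s, f #s =
      ∑ k ∈ Icc m (Fintype.card ι), (Fintype.card ι).choose k • f k := by
  have := sum_powerset_apply_card (fun k => if m ≤ k then f k else 0) (x := (univ : Finset ι))
  rw [powerset_univ, card_univ] at this
  simp_rw [sum_filter, this, smul_ite, smul_zero]
  rw [← sum_filter]
  congr 1
  ext k
  simp [and_comm]

noncomputable def binomTail (N m : ℕ) (p : ℝ) : ℝ :=
  ∑ k ∈ Icc m N, (N.choose k : ℝ) * p ^ k * (1 - p) ^ (N - k)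

theorem toReal_sum_choose_eq_binomTail {P : ℝ≥0∞} (hP : P ≤ 1) (N m : ℕ) :
    (∑ k ∈ Icc m N, (N.choose k : ℝ≥0∞) * P ^ k * (1 - P) ^ (N - k)).toReal =
      binomTail N m P.toReal := by
  have hPtop : P ≠ ⊤ := ne_top_of_le_ne_top ENNReal.one_ne_top hP
  rw [ENNReal.toReal_sum fun k _ => by finiteness]
  simp [binomTail, ENNReal.toReal_sub_of_le hP ENNReal.one_ne_top]

namespace ProbabilityTheory

variable {Ω ι β : Type*} [MeasurableSpace Ω] {μ : Measure Ω} [IsProbabilityMeasure μ]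
  [Fintype ι] [MeasurableSpace β] {X : ι → Ω → β} {S : Set β} [DecidablePred (· ∈ S)]

omit [MeasurableSpace Ω] [MeasurableSpace β] in
theorem setOf_filter_mem_eq_iInter [DecidableEq ι] (s : Finset ι) :
    {ω | ({i | X i ω ∈ S} : Finset ι) = s} =
      ⋂ i, X i ⁻¹' (if i ∈ s then S else Sᶜ) := by
  ext ω
  simp only [Set.mem_ofPred_eq, Set.mem_iInter, Set.mem_preimage, Finset.ext_iff, mem_filter,
    mem_univ, true_and]
  refine forall_congr' fun i => ?_
  split_ifs with hi <;> simp [hi]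

theorem iIndepFun.measure_filter_mem_eq (hX : ∀ i, Measurable (X i)) (hind : iIndepFun X μ)
    (hS : MeasurableSet S) {P : ℝ≥0∞} (hP : ∀ i, μ (X i ⁻¹' S) = P) (s : Finset ι) :
    μ {ω | ({i | X i ω ∈ S} : Finset ι) = s} = P ^ #s * (1 - P) ^ (Fintype.card ι - #s) := by
  classical
  rw [setOf_filter_mem_eq_iInter,
    hind.meas_iInter fun i => ⟨_, by split_ifs; exacts [hS, hS.compl], rfl⟩]
  have hfactor (i : ι) :
      μ (X i ⁻¹' (if i ∈ s then S else Sᶜ)) = if i ∈ s then P else 1 - P := by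
    split_ifs
    · exact hP i
    · rw [Set.preimage_compl, prob_compl_eq_one_sub (hX i hS), hP i]
  simp_rw [hfactor]
  rw [prod_ite]
  simp only [prod_const, filter_mem_eq_inter, univ_inter, ← compl_eq_univ_sdiff, filter_not,
    card_compl]

theorem iIndepFun.measure_le_card_filter_mem (hX : ∀ i, Measurable (X i)) (hind : iIndepFun X μ)
    (hS : MeasurableSet S) {P : ℝ≥0∞} (hP : ∀ i, μ (X i ⁻¹' S) = P) (m : ℕ) :
    μ {ω | m ≤ #{i | X i ω ∈ S}} = ∑ k ∈ Icc m (Fintype.card ι),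
      ((Fintype.card ι).choose k : ℝ≥0∞) * P ^ k * (1 - P) ^ (Fintype.card ι - k) := by
  classical
  have hfiber := sum_measure_preimage_singleton (μ := μ) ({s | m ≤ #s} : Finset (Finset ι))
    (f := fun ω => ({i | X i ω ∈ S} : Finset ι)) fun s _ => by
      simp only [Set.preimage, Set.mem_singleton_iff]
      rw [setOf_filter_mem_eq_iInter]
      exact .iInter fun i => hX i (by split_ifs; exacts [hS, hS.compl])
  simp_rw [mul_assoc, ← nsmul_eq_mul]
  rw [← Finset.sum_card_ge_eq_sum_choose (fun k => P ^ k * (1 - P) ^ (Fintype.card ι - k)),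
    ← sum_congr rfl fun s _ => hind.measure_filter_mem_eq hX hS hP s]
  convert hfiber.symm using 2
  · ext ω
    simp
  · rfl

end ProbabilityTheory

theorem measureReal_medianFin_le {Ω : Type*} [MeasurableSpace Ω] {μ : Measure Ω}
    [IsProbabilityMeasure μ] {B n : ℕ} (hBn : B = 2 * n + 1) {X : Fin B → Ω → ℝ}
    (hX : ∀ j, Measurable (X j)) (hind : iIndepFun X μ)
    (hident : ∀ i j, IdentDistrib (X i) (X j) μ μ) (j : Fin B) (x : ℝ) :
    μ.real {ω | medianFin (fun i => X i ω) ≤ x} =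
      binomTail (2 * n + 1) (n + 1) (μ.real {ω | X j ω ≤ x}) := by
  subst hBn
  have hevent :
      {ω | medianFin (fun i => X i ω) ≤ x} = {ω | n + 1 ≤ #{i | X i ω ∈ Set.Iic x}} := by
    ext ω
    simp only [Set.mem_ofPred_eq, medianFin_le_iff ⟨n, rfl⟩, Set.mem_Iic]
    rw [show (2 * n + 1 + 1) / 2 = n + 1 by omega]
  rw [measureReal_def, hevent, hind.measure_le_card_filter_mem hX measurableSet_Iic
    (fun i => (hident i j).measure_mem_eq measurableSet_Iic), Fintype.card_fin,
    toReal_sum_choose_eq_binomTail prob_le_one]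
  rfl

theorem hasDerivAt_binomTail {N m : ℕ} (hmN : m ≤ N) (p : ℝ) :
    HasDerivAt (binomTail N m) (m * N.choose m * p ^ (m - 1) * (1 - p) ^ (N - m)) p := by
  set u : ℕ → ℝ := fun k => k * N.choose k * p ^ (k - 1) * (1 - p) ^ (N - k)
  have hterm (k : ℕ) : HasDerivAt (fun q : ℝ => (N.choose k : ℝ) * q ^ k * (1 - q) ^ (N - k))
      (-(u (k + 1) - u k)) p := by
    have hchoose : ((N - k : ℕ) : ℝ) * N.choose k = (k + 1 : ℕ) * N.choose (k + 1) := by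
      exact_mod_cast (mul_comm _ _).trans ((N.choose_succ_right_eq k).symm.trans (mul_comm _ _))
    have h1 : HasDerivAt (fun q : ℝ => (1 - q) ^ (N - k))
        ((N - k : ℕ) * (1 - p) ^ (N - k - 1) * (-1)) p :=
      (hasDerivAt_pow (N - k) (1 - p)).comp p ((hasDerivAt_id p).const_sub 1)
    refine (((hasDerivAt_pow k p).const_mul (N.choose k : ℝ)).mul h1).congr_deriv ?_
    simp only [u, Nat.add_sub_cancel, show N - (k + 1) = N - k - 1 by omega, ← hchoose]
    ring
  have hsum := HasDerivAt.fun_sum (u := Icc m N) fun k _ => hterm k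
  refine hsum.congr_deriv ?_
  rw [sum_neg_distrib, sum_Icc_sub hmN]
  simp [u, Nat.choose_succ_self]

theorem binomTail_zero {N m : ℕ} (hm : m ≠ 0) : binomTail N m 0 = 0 :=
  sum_eq_zero fun k hk => by simp [zero_pow (by grind : k ≠ 0)]

theorem binomTail_one {N m : ℕ} (hmN : m ≤ N) : binomTail N m 1 = 1 := by
  rw [binomTail, sum_eq_single_of_mem N (mem_Icc.2 ⟨hmN, le_rfl⟩)]
  · simp
  · intro k hk hkN
    simp [zero_pow (by grind : N - k ≠ 0)]

theorem binomTail_eq_mul_integral {N m : ℕ} (hm : m ≠ 0) (hmN : m ≤ N) (p : ℝ) :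
    binomTail N m p = m * N.choose m * ∫ x in 0..p, x ^ (m - 1) * (1 - x) ^ (N - m) := by
  have hftc := intervalIntegral.integral_eq_sub_of_hasDerivAt
    (fun x _ => hasDerivAt_binomTail hmN x) ((by fun_prop :
      Continuous fun x : ℝ => m * N.choose m * x ^ (m - 1) * (1 - x) ^ (N - m)).intervalIntegrable
      0 p)
  rw [binomTail_zero hm, sub_zero] at hftc
  rw [← hftc, ← intervalIntegral.integral_const_mul]
  congr 1 with x
  ring

theorem binomTail_eq_integral_div_integral {N m : ℕ} (hm : m ≠ 0) (hmN : m ≤ N) (p : ℝ) :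
    binomTail N m p = (∫ x in 0..p, x ^ (m - 1) * (1 - x) ^ (N - m)) /
      ∫ x in 0..1, x ^ (m - 1) * (1 - x) ^ (N - m) := by
  have hone := binomTail_eq_mul_integral hm hmN 1
  rw [binomTail_one hmN] at hone
  rw [binomTail_eq_mul_integral hm hmN, eq_div_iff (right_ne_zero_of_mul (hone ▸ one_ne_zero))]
  linear_combination -(∫ x in 0..p, x ^ (m - 1) * (1 - x) ^ (N - m)) * hone

theorem integral_pow_mul_one_sub_pow_eq {n : ℕ} (hn : n ≠ 0) (q : ℝ) :
    ∫ x in 0..q, x ^ n * (1 - x) ^ n =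
      (2 * √n)⁻¹ * (4 ^ n)⁻¹ *
        ∫ u in -√n..2 * √n * (q - 1 / 2), (1 - u ^ 2 / n) ^ n := by
  have hc : (2 * √(n : ℝ))⁻¹ ≠ 0 := by positivity
  have hsubst := intervalIntegral.integral_comp_mul_add (fun x : ℝ => x ^ n * (1 - x) ^ n) hc
    (1 / 2) (a := -√n) (b := 2 * √n * (q - 1 / 2))
  have hsq : √(n : ℝ) ^ 2 = n := Real.sq_sqrt (Nat.cast_nonneg n)
  have hlo : (2 * √(n : ℝ))⁻¹ * -√n + 1 / 2 = 0 := by field_simp; ring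
  have hhi : (2 * √(n : ℝ))⁻¹ * (2 * √n * (q - 1 / 2)) + 1 / 2 = q := by field_simp; ring
  rw [hlo, hhi, smul_eq_mul, inv_inv] at hsubst
  rw [mul_assoc, ← intervalIntegral.integral_const_mul, eq_inv_mul_iff_mul_eq₀ (by positivity),
    ← hsubst]
  congr 1 with u
  rw [← mul_pow, ← inv_pow, ← mul_pow]
  congr 1
  field_simp
  linear_combination 4 * u ^ 2 * hsq

theorem binomTail_two_mul_add_one_eq_div {n : ℕ} (hn : n ≠ 0) {p : ℝ} (hp : 0 ≤ p) :
    binomTail (2 * n + 1) (n + 1) p =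
      (∫ u in Set.Ioc (-√n) (2 * √n * (p - 1 / 2)), (1 - u ^ 2 / n) ^ n) /
        ∫ u in Set.Ioc (-√n) √n, (1 - u ^ 2 / n) ^ n := by
  have hsqrt : 0 ≤ √(n : ℝ) := sqrt_nonneg _
  rw [← intervalIntegral.integral_of_le (by nlinarith),
    ← intervalIntegral.integral_of_le (by linarith),
    binomTail_eq_integral_div_integral (Nat.add_one_ne_zero n) (by omega),
    show 2 * n + 1 - (n + 1) = n by omega, Nat.add_sub_cancel,
    integral_pow_mul_one_sub_pow_eq hn, integral_pow_mul_one_sub_pow_eq hn,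
    mul_div_mul_left _ _ (by positivity), show (2 : ℝ) * √n * (1 - 1 / 2) = √n by ring]

theorem measureReal_sqrt_mul_medianFin_le {Ω : Type*} [MeasurableSpace Ω] {μ : Measure Ω}
    [IsProbabilityMeasure μ] {B n : ℕ} (hBn : B = 2 * n + 1) (hn : n ≠ 0)
    {X : Fin B → Ω → ℝ} (hX : ∀ j, Measurable (X j)) (hind : iIndepFun X μ)
    (hident : ∀ i j, IdentDistrib (X i) (X j) μ μ) (j : Fin B) (t : ℝ) :
    μ.real {ω | √B * medianFin (fun i => X i ω) ≤ t} =
      (∫ u in Set.Ioc (-√n) (2 * √n * (μ.real {ω | X j ω ≤ t / √B} - 1 / 2)),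
        (1 - u ^ 2 / n) ^ n) / ∫ u in Set.Ioc (-√n) √n, (1 - u ^ 2 / n) ^ n := by
  have hevent : {ω | √B * medianFin (fun i => X i ω) ≤ t} =
      {ω | medianFin (fun i => X i ω) ≤ t / √B} := by
    ext ω
    rw [Set.mem_ofPred_eq, Set.mem_ofPred_eq, le_div_iff₀ (sqrt_pos.2 (by rw [hBn]; positivity)),
      mul_comm]
  rw [hevent, measureReal_medianFin_le hBn hX hind hident j,
    binomTail_two_mul_add_one_eq_div hn measureReal_nonneg]

theorem tendsto_one_sub_sq_div_pow (u : ℝ) :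
    Tendsto (fun n : ℕ => (1 - u ^ 2 / n) ^ n) atTop (𝓝 (exp (-u ^ 2))) := by
  simpa [sub_eq_add_neg, neg_div] using tendsto_one_add_div_pow_exp (-u ^ 2)

theorem abs_one_sub_sq_div_pow_le {n : ℕ} {u : ℝ} (hu : u ^ 2 ≤ n) :
    |(1 - u ^ 2 / n) ^ n| ≤ exp (-u ^ 2) := by
  rw [abs_of_nonneg (pow_nonneg (sub_nonneg.2 (div_le_one_of_le₀ hu n.cast_nonneg)) n)]
  exact one_sub_div_pow_le_exp_neg hu

theorem tendsto_setIntegral_one_sub_sq_div_pow {ι : Type*} {l : Filter ι}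
    [l.IsCountablyGenerated] {n : ι → ℕ} (hn : Tendsto n l atTop) {T : ι → Set ℝ}
    (hT : ∀ i, MeasurableSet (T i)) (hTn : ∀ i, ∀ u ∈ T i, u ^ 2 ≤ n i) {S : Set ℝ}
    (hS : MeasurableSet S) (hTS : ∀ᵐ u, ∀ᶠ i in l, u ∈ T i ↔ u ∈ S) :
    Tendsto (fun i => ∫ u in T i, (1 - u ^ 2 / n i) ^ n i) l
      (𝓝 (∫ u in S, exp (-u ^ 2))) := by
  simp_rw [← integral_indicator (hT _), ← integral_indicator hS]
  refine tendsto_integral_filter_of_dominated_convergence (fun u => exp (-u ^ 2))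
    (.of_forall fun i => (by fun_prop : Continuous fun u : ℝ => (1 - u ^ 2 / n i) ^ n i)
      |>.aestronglyMeasurable.indicator (hT i))
    (.of_forall fun i => .of_forall fun u => ?_)
    (by simpa using integrable_exp_neg_mul_sq one_pos) ?_
  · by_cases hu : u ∈ T i
    · simpa [Set.indicator_of_mem hu] using abs_one_sub_sq_div_pow_le (hTn i u hu)
    · simp [Set.indicator_of_notMem hu, (exp_pos _).le]
  · filter_upwards [hTS] with u hu
    by_cases huS : u ∈ S
    · rw [Set.indicator_of_mem huS]
      refine ((tendsto_one_sub_sq_div_pow u).comp hn).congr' ?_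
      filter_upwards [hu] with i hi
      simp [Set.indicator_of_mem (hi.2 huS)]
    · rw [Set.indicator_of_notMem huS]
      refine tendsto_const_nhds.congr' ?_
      filter_upwards [hu] with i hi
      simp [Set.indicator_of_notMem (mt hi.1 huS)]

theorem eventually_mem_Ioc_iff_mem_Iic {ι : Type*} {l : Filter ι} {a s : ι → ℝ} {L u : ℝ}
    (ha : Tendsto a l atBot) (hs : Tendsto s l (𝓝 L)) (hu : u ≠ L) :
    ∀ᶠ i in l, u ∈ Set.Ioc (a i) (s i) ↔ u ∈ Set.Iic L := by
  rcases hu.lt_or_gt with h | h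
  · filter_upwards [ha.eventually_lt_atBot u, hs.eventually (eventually_gt_nhds h)] with i h1 h2
    simp [h1, h2.le, h.le]
  · filter_upwards [hs.eventually (eventually_lt_nhds h)] with i hi
    exact iff_of_false (fun hmem => hi.not_ge hmem.2) h.not_ge

theorem tendsto_setIntegral_Ioc_div_setIntegral_Ioc {ι : Type*} {l : Filter ι}
    [l.IsCountablyGenerated] {n : ι → ℕ} (hn : Tendsto n l atTop) {s : ι → ℝ} {L : ℝ}
    (hs : Tendsto s l (𝓝 L)) (hs_le : ∀ i, s i ≤ √(n i)) :
    Tendsto (fun i => (∫ u in Set.Ioc (-√(n i)) (s i), (1 - u ^ 2 / n i) ^ n i) /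
        ∫ u in Set.Ioc (-√(n i)) √(n i), (1 - u ^ 2 / n i) ^ n i) l
      (𝓝 ((∫ u in Set.Iic L, exp (-u ^ 2)) / √π)) := by
  have hsqrt : Tendsto (fun i => √(n i : ℝ)) l atTop :=
    tendsto_sqrt_atTop.comp (tendsto_natCast_atTop_atTop.comp hn)
  have hlower : Tendsto (fun i => -√(n i : ℝ)) l atBot := tendsto_neg_atTop_atBot.comp hsqrt
  have hsq {i : ι} {u c : ℝ} (hc : c ≤ √(n i)) (hu : u ∈ Set.Ioc (-√(n i)) c) :
      u ^ 2 ≤ n i :=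
    (sq_le_sq' hu.1.le (hu.2.trans hc)).trans_eq (sq_sqrt (Nat.cast_nonneg _))
  have hnum := tendsto_setIntegral_one_sub_sq_div_pow hn (fun _ => measurableSet_Ioc)
    (fun i _ => hsq (hs_le i)) measurableSet_Iic
    ((volume.ae_ne L).mono fun u hu => eventually_mem_Ioc_iff_mem_Iic hlower hs hu)
  have hden := tendsto_setIntegral_one_sub_sq_div_pow hn (fun _ => measurableSet_Ioc)
    (fun _ _ => hsq le_rfl) MeasurableSet.univ (.of_forall fun u => by
      filter_upwards [hlower.eventually_lt_atBot u, hsqrt.eventually_ge_atTop u] with i h1 h2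
      simpa using ⟨h1, h2⟩)
  rw [setIntegral_univ,
    show ∫ u : ℝ, exp (-u ^ 2) = √π by simpa using integral_gaussian 1] at hden
  exact hnum.div hden (by positivity)

theorem gaussianReal_Iic_const_mul {c : ℝ} (hc : 0 < c) (m : ℝ) (v : ℝ≥0) (t : ℝ) :
    gaussianReal (c * m) (.mk (c ^ 2) (sq_nonneg _) * v) (Set.Iic (c * t)) =
      gaussianReal m v (Set.Iic t) := by
  rw [← gaussianReal_map_const_mul, Measure.map_apply (measurable_const_mul c) measurableSet_Iic]
  congr 1 with x
  simp [mul_le_mul_iff_right₀ hc]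

theorem measureReal_gaussianReal_half_Iic (a : ℝ) :
    (gaussianReal 0 2⁻¹).real (Set.Iic a) = (∫ u in Set.Iic a, exp (-u ^ 2)) / √π := by
  rw [measureReal_def, gaussianReal_apply_eq_integral _ (by norm_num),
    ENNReal.toReal_ofReal
      (setIntegral_nonneg measurableSet_Iic fun x _ => gaussianPDFReal_nonneg _ _ x),
    div_eq_inv_mul, ← integral_const_mul]
  congr 1 with x
  simp only [gaussianPDFReal, NNReal.coe_inv, NNReal.coe_ofNat, sub_zero]
  field_simp

theorem measureReal_gaussianReal_Iic {g : ℝ} (hg : 0 < g) (t : ℝ) :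
    (gaussianReal 0 (1 / (4 * g ^ 2)).toNNReal).real (Set.Iic t) =
      (∫ u in Set.Iic (√2 * g * t), exp (-u ^ 2)) / √π := by
  have hvar :
      (.mk ((√2 * g) ^ 2) (sq_nonneg _) * (1 / (4 * g ^ 2)).toNNReal : ℝ≥0) = 2⁻¹ := by
    ext
    simp only [NNReal.coe_mul, NNReal.coe_mk, mul_pow, sq_sqrt zero_le_two,
      coe_toNNReal _ (by positivity : (0 : ℝ) ≤ 1 / (4 * g ^ 2))]
    field_simp
    norm_num
  rw [← measureReal_gaussianReal_half_Iic, measureReal_def, measureReal_def,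
    ← gaussianReal_Iic_const_mul (c := √2 * g) (by positivity), mul_zero, hvar, mul_assoc]

theorem HasDerivAt.tendsto_mul_sub_div {G : ℝ → ℝ} {g x : ℝ} (hG : HasDerivAt G g x)
    {ι : Type*} {l : Filter ι} {r : ι → ℝ} (hr : Tendsto r l atTop) (t : ℝ) :
    Tendsto (fun i => r i * (G (x + t / r i) - G x)) l (𝓝 (g * t)) := by
  rcases eq_or_ne t 0 with rfl | ht
  · simpa using tendsto_const_nhds
  have hstep : Tendsto (fun i => t / r i) l (𝓝[≠] 0) :=
    tendsto_nhdsWithin_of_tendsto_nhds_of_eventually_within _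
      (by simpa using tendsto_const_nhds.div_atTop hr)
      ((hr.eventually_gt_atTop 0).mono fun i hi => div_ne_zero ht hi.ne')
  rw [mul_comm]
  refine (((hasDerivAt_iff_tendsto_slope_zero.1 hG).comp hstep).const_mul t).congr' ?_
  filter_upwards [hr.eventually_gt_atTop 0] with i hi
  simp only [Function.comp_apply, smul_eq_mul]
  field_simp

theorem tendsto_sqrt_mul_of_abs_le_div_sqrt {B : ℕ → ℕ}
    (hB : Tendsto (fun b : ℕ => (B b : ℝ) / b) atTop (𝓝 0)) {a : ℕ → ℝ} {M : ℝ}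
    (ha : ∀ b, |a b| ≤ M / √b) : Tendsto (fun b => √(B b) * a b) atTop (𝓝 0) := by
  have hbound : Tendsto (fun b => M * √((B b : ℝ) / b)) atTop (𝓝 0) := by
    simpa using ((continuous_sqrt.tendsto 0).comp hB).const_mul M
  refine squeeze_zero_norm (fun b => ?_) hbound
  rw [norm_mul, norm_of_nonneg (sqrt_nonneg _), sqrt_div' _ (Nat.cast_nonneg b), mul_div_left_comm]
  exact mul_le_mul_of_nonneg_left (ha b) (sqrt_nonneg _)

theorem tendsto_two_mul_sqrt_div_sqrt_two_mul_add_one {ι : Type*} {l : Filter ι} {n : ι → ℕ}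
    (hn : Tendsto n l atTop) :
    Tendsto (fun i => 2 * √(n i) / √(2 * n i + 1)) l (𝓝 √2) := by
  have hlim : Tendsto (fun i => 2 / √(2 + (n i : ℝ)⁻¹)) l (𝓝 (2 / √(2 + 0))) :=
    tendsto_const_nhds.div
      ((tendsto_inv_atTop_zero.comp (tendsto_natCast_atTop_atTop.comp hn)).const_add 2).sqrt
      (by positivity)
  rw [add_zero, div_sqrt] at hlim
  refine hlim.congr' ?_
  filter_upwards [hn.eventually_ne_atTop 0] with i hi
  have : (0 : ℝ) < n i := by positivity
  rw [div_eq_div_iff (by positivity) (by positivity), mul_assoc, ← sqrt_mul this.le]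
  congr 2
  field_simp

theorem tendsto_two_mul_sqrt_mul_sub_half {G : ℝ → ℝ} {g M t : ℝ} (hG0 : G 0 = 1 / 2)
    (hG : HasDerivAt G g 0) {B n : ℕ → ℕ} (hBn : ∀ b, B b = 2 * n b + 1)
    (hn : Tendsto n atTop atTop) (hBratio : Tendsto (fun b : ℕ => (B b : ℝ) / b) atTop (𝓝 0))
    {p : ℕ → ℝ} (hp : ∀ b, |p b - G (t / √(B b))| ≤ M / √b) :
    Tendsto (fun b => 2 * √(n b) * (p b - 1 / 2)) atTop (𝓝 (√2 * g * t)) := by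
  have hB : Tendsto (fun b => √(B b : ℝ)) atTop atTop := by
    refine tendsto_sqrt_atTop.comp (tendsto_natCast_atTop_atTop.comp ?_)
    exact tendsto_atTop_mono (fun b => by rw [hBn b]; omega) hn
  have hratio : Tendsto (fun b => 2 * √(n b) / √(B b)) atTop (𝓝 √2) := by
    simpa [hBn] using tendsto_two_mul_sqrt_div_sqrt_two_mul_add_one hn
  have hsum := hratio.mul ((tendsto_sqrt_mul_of_abs_le_div_sqrt hBratio hp).add
    (by simpa using hG.tendsto_mul_sub_div hB t))
  rw [zero_add, ← mul_assoc] at hsum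
  refine hsum.congr' ?_
  filter_upwards [hB.eventually_gt_atTop 0] with b hb
  rw [hG0]
  field_simp
  ring

theorem median_clt_triangular_array_general
    {Ω : Type*} [MeasurableSpace Ω] (μ : Measure Ω) [IsProbabilityMeasure μ]
    (G : ℝ → ℝ) (g : ℝ)
    (hG0 : G 0 = 1 / 2) (hG_deriv : HasDerivAt G g 0) (hg_pos : 0 < g)
    (B : ℕ → ℕ) (hBodd : ∀ b, Odd (B b))
    (hBtop : Tendsto B atTop atTop)
    (hBratio : Tendsto (fun b : ℕ => (B b : ℝ) / (b : ℝ)) atTop (𝓝 0))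
    (M : ℝ)
    (X : (b : ℕ) → Fin (B b) → Ω → ℝ)
    (hmeas : ∀ b j, Measurable (X b j))
    (hindep : ∀ b, iIndepFun (X b) μ)
    (hident : ∀ b j j', IdentDistrib (X b j) (X b j') μ μ)
    (hcdf_close : ∀ b (j : Fin (B b)) (x : ℝ),
      |(μ {ω | X b j ω ≤ x}).toReal - G x| ≤ M / Real.sqrt b) :
    ∀ t : ℝ,
      Tendsto (fun b : ℕ =>
          (μ {ω | Real.sqrt (B b) * medianFin (fun j => X b j ω) ≤ t}).toReal)
        atTop
        (𝓝 (((gaussianReal 0 (Real.toNNReal (1 / (4 * g ^ 2)))) (Set.Iic t)).toReal)) := by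
  intro t
  choose n hBn using hBodd
  have hn : Tendsto n atTop atTop :=
    ((Nat.tendsto_div_const_atTop two_ne_zero).comp hBtop).congr fun b => by simp [hBn b]; omega
  let j₀ (b : ℕ) : Fin (B b) := ⟨0, by rw [hBn b]; exact Nat.succ_pos _⟩
  set p : ℕ → ℝ := fun b => μ.real {ω | X b (j₀ b) ω ≤ t / √(B b)}
  have hs_le (b : ℕ) : 2 * √(n b) * (p b - 1 / 2) ≤ √(n b) := by
    have : p b ≤ 1 := measureReal_le_one
    nlinarith [sqrt_nonneg (n b : ℝ)]
  rw [← measureReal_def, measureReal_gaussianReal_Iic hg_pos]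
  refine (tendsto_setIntegral_Ioc_div_setIntegral_Ioc hn (tendsto_two_mul_sqrt_mul_sub_half hG0
    hG_deriv hBn hn hBratio fun b => hcdf_close b (j₀ b) _) hs_le).congr' ?_
  filter_upwards [hn.eventually_ne_atTop 0] with b hb
  exact (measureReal_sqrt_mul_medianFin_le (hBn b) hb (hmeas b) (hindep b) (hident b) (j₀ b)
    t).symm

/-- (Median CLT for triangular arrays with perturbed distributions.)
Let G be a CDF with G(0) = 1/2 that is differentiable at 0 with derivative g > 0.
Let B(b) be odd, B(b) → ∞, B(b)/b → 0, and let M > 0. If for each b the variables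
X_{1,b},…,X_{B(b),b} are i.i.d. with common CDF F_b satisfying
sup_x |F_b(x) − G(x)| ≤ M/√b, then √(B(b)) · median(X_{1,b},…,X_{B(b),b}) converges in
distribution to N(0, 1/(4g²)) (stated as pointwise convergence of CDFs, the Gaussian
CDF being continuous). -/
theorem median_clt_triangular_array
    {Ω : Type*} [MeasurableSpace Ω] (μ : Measure Ω) [IsProbabilityMeasure μ]
    (G : ℝ → ℝ) (g : ℝ)
    (hG_mono : Monotone G) (hG_bounds : ∀ x, 0 ≤ G x ∧ G x ≤ 1)
    (hG_right_cont : ∀ x, ContinuousWithinAt G (Set.Ici x) x)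
    (hG_bot : Tendsto G atBot (𝓝 0)) (hG_top : Tendsto G atTop (𝓝 1))
    (hG0 : G 0 = 1 / 2) (hG_deriv : HasDerivAt G g 0) (hg_pos : 0 < g)
    (B : ℕ → ℕ) (hBodd : ∀ b, Odd (B b))
    (hBtop : Tendsto B atTop atTop)
    (hBratio : Tendsto (fun b : ℕ => (B b : ℝ) / (b : ℝ)) atTop (𝓝 0))
    (M : ℝ) (hM : 0 < M)
    (X : (b : ℕ) → Fin (B b) → Ω → ℝ)
    (hmeas : ∀ b j, Measurable (X b j))
    (hindep : ∀ b, iIndepFun (X b) μ)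
    (hident : ∀ b j j', IdentDistrib (X b j) (X b j') μ μ)
    (hcdf_close : ∀ b (j : Fin (B b)) (x : ℝ),
      |(μ {ω | X b j ω ≤ x}).toReal - G x| ≤ M / Real.sqrt b) :
    ∀ t : ℝ,
      Tendsto (fun b : ℕ =>
          (μ {ω | Real.sqrt (B b) * medianFin (fun j => X b j ω) ≤ t}).toReal)
        atTop
        (𝓝 (((gaussianReal 0 (Real.toNNReal (1 / (4 * g ^ 2)))) (Set.Iic t)).toReal)) :=
  median_clt_triangular_array_general μ G g hG0 hG_deriv hg_pos B hBodd hBtop hBratio M X hmeas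
    hindep hident hcdf_close
end
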